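/- arXiv:2412.10182 — 3 statements merged into one kernel-verified Lean document; each statement's English description precedes it below -/
import Mathlib

section
/- Let W* ∈ ℝ^{C×d} and W̃ ∈ ℝ^{C×d}, and set Δ = W̃ − W* (rows Δ_j ∈ ℝ^d). For any feature F ∈ ℝ^d with ‖F‖_∞ ≤ 1 (so that |Δ_j·F| ≤ ‖Δ_j‖_1), the total variation between softmax outputs satisfies Σ_{j=1}^{C} |softmax(W̃F)_j − softmax(W*F)_j| ≤ Σ_{j=1}^{C} |e^{‖Δ_j‖_1} − 1|. -/
open Real Finset

theorem softmax_core_ineq (Z Ek s u : ℝ) (hEk : 0 < Ek) (hEkZ : Ek ≤ Z) (hu : 1 ≤ u)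
    (hs1 : s ≤ u) (hs2 : 1 ≤ s * u) :
    2 * (Ek * ((Z - Ek) * |s - 1|)) ≤ (u - 1) * ((Z - Ek + Ek * s) * Z) := by
  have hZ : 0 < Z := lt_of_lt_of_le hEk hEkZ
  rcases le_or_gt 1 s with h | h
  · rw [abs_of_nonneg (by linarith)]
    nlinarith [mul_nonneg (by linarith : (0:ℝ) ≤ s - 1) (by nlinarith [sq_nonneg (Z - Ek)] : (0:ℝ) ≤ Z*Z - 2*Ek*Z + 2*Ek*Ek),
      mul_nonneg (mul_nonneg (by linarith : (0:ℝ) ≤ u - s) hZ.le) hZ.le,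
      mul_nonneg (mul_nonneg (mul_nonneg (by linarith : (0:ℝ) ≤ u-1) (by linarith : (0:ℝ) ≤ s-1)) hEk.le) hZ.le]
  · rw [abs_of_neg (by linarith)]
    nlinarith [mul_nonneg (by linarith : (0:ℝ) ≤ 1 - s) (by nlinarith [sq_nonneg (Z - Ek)] : (0:ℝ) ≤ Z*Z - 2*Ek*Z + 2*Ek*Ek),
      mul_nonneg (mul_nonneg (mul_nonneg (by linarith : (0:ℝ) ≤ u-1) (by linarith : (0:ℝ) ≤ 1-s)) hZ.le) (by linarith : (0:ℝ) ≤ Z - Ek),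
      mul_nonneg (mul_nonneg (by linarith : (0:ℝ) ≤ s*u - 1) hZ.le) hZ.le]

theorem softmax_step {C : ℕ} (w : Fin C → ℝ) (k : Fin C) (δ r : ℝ) (hδ : |δ| ≤ r) :
    ∑ j, |Real.exp (Function.update w k (w k + δ) j) / (∑ l, Real.exp (Function.update w k (w k + δ) l))
        - Real.exp (w j) / (∑ l, Real.exp (w l))| ≤ Real.exp r - 1 := by
  have habs := abs_le.1 hδ
  set E : Fin C → ℝ := fun j => Real.exp (w j) with hE
  set s : ℝ := Real.exp δ with hs
  set u : ℝ := Real.exp r with hu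
  have hu1 : 1 ≤ u := Real.one_le_exp (by linarith [abs_nonneg δ])
  have hsu1 : s ≤ u := Real.exp_le_exp.2 habs.2
  have hsu2 : 1 ≤ s * u := by
    rw [hs, hu, ← Real.exp_add]
    exact Real.one_le_exp (by linarith [habs.1])
  have hEpos : ∀ j, 0 < E j := fun j => Real.exp_pos _
  have hupd : ∀ j, Real.exp (Function.update w k (w k + δ) j) = Function.update E k (E k * s) j := by
    intro j
    by_cases h : j = k
    · subst h; simp only [Function.update_self, hE, hs, ← Real.exp_add]
    · simp [Function.update_of_ne h, hE]
  set Z : ℝ := ∑ l, E l with hZ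
  have hZpos : 0 < Z := Finset.sum_pos (fun j _ => hEpos j) ⟨k, Finset.mem_univ k⟩
  have hEkZ : E k ≤ Z := Finset.single_le_sum (fun j _ => (hEpos j).le) (Finset.mem_univ k)
  set D : ℝ := Z - E k + E k * s with hD
  have hspos : 0 < s := Real.exp_pos _
  have hDpos : 0 < D := by nlinarith [hEpos k]
  have hZ' : (∑ l, Real.exp (Function.update w k (w k + δ) l)) = D := by
    simp only [hupd]
    rw [Finset.sum_update_of_mem (Finset.mem_univ k),
      Finset.sum_sdiff_eq_sub (Finset.subset_univ {k})]
    simp [hD, ← hZ]; ring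
  rw [hZ']
  simp only [hupd, ← hZ]
  have hEkdiff : ∑ j ∈ univ \ {k}, E j = Z - E k := by
    rw [Finset.sum_sdiff_eq_sub (Finset.subset_univ {k})]; simp [← hZ]
  have hterm_ne : ∀ j ∈ univ \ {k},
      |Function.update E k (E k * s) j / D - E j / Z| = E j * (E k * |s - 1| / (D * Z)) := by
    intro j hj
    have hjk : j ≠ k := by simpa using (Finset.mem_sdiff.1 hj).2
    rw [Function.update_of_ne hjk, div_sub_div _ _ (ne_of_gt hDpos) (ne_of_gt hZpos), abs_div,
      abs_of_pos (mul_pos hDpos hZpos)]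
    have : E j * Z - D * E j = (E j * E k) * -(s - 1) := by rw [hD]; ring
    rw [this, abs_mul, abs_neg, abs_of_nonneg (mul_nonneg (hEpos j).le (hEpos k).le)]
    ring
  have hterm_k : |Function.update E k (E k * s) k / D - E k / Z|
      = E k * ((Z - E k) * |s - 1|) / (D * Z) := by
    rw [Function.update_self, div_sub_div _ _ (ne_of_gt hDpos) (ne_of_gt hZpos), abs_div,
      abs_of_pos (mul_pos hDpos hZpos)]
    have : E k * s * Z - D * E k = (E k * (Z - E k)) * (s - 1) := by rw [hD]; ring
    rw [this, abs_mul, abs_of_nonneg (mul_nonneg (hEpos k).le (by linarith))]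
    ring
  calc ∑ j, |Function.update E k (E k * s) j / D - E j / Z|
      = ∑ j ∈ univ \ {k}, |Function.update E k (E k * s) j / D - E j / Z|
        + |Function.update E k (E k * s) k / D - E k / Z| := by
        rw [Finset.sum_eq_sum_sdiff_singleton_add (Finset.mem_univ k)]
    _ = (Z - E k) * (E k * |s - 1| / (D * Z)) + E k * ((Z - E k) * |s - 1|) / (D * Z) := by
        rw [Finset.sum_congr rfl hterm_ne, ← Finset.sum_mul, hEkdiff, hterm_k]
    _ = 2 * (E k * ((Z - E k) * |s - 1|)) / (D * Z) := by ring
    _ ≤ u - 1 := by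
        rw [div_le_iff₀ (mul_pos hDpos hZpos)]
        exact softmax_core_ineq Z (E k) s u (hEpos k) hEkZ hu1 hsu1 hsu2

theorem softmax_tv_aux {C : ℕ} (a b rr : Fin C → ℝ) (hab : ∀ j, |b j - a j| ≤ rr j)
    (S : Finset (Fin C)) :
    ∑ j, |Real.exp (if j ∈ S then b j else a j) / (∑ l, Real.exp (if l ∈ S then b l else a l))
        - Real.exp (a j) / (∑ l, Real.exp (a l))| ≤ ∑ k ∈ S, (Real.exp (rr k) - 1) := by
  classical
  induction S using Finset.induction_on with
  | empty => simp
  | @insert k S hk ih =>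
    set v : Fin C → ℝ := fun j => if j ∈ S then b j else a j with hv
    have hvk : v k = a k := by simp [hv, hk]
    have hnew : (fun j => if j ∈ insert k S then b j else a j)
        = Function.update v k (v k + (b k - a k)) := by
      funext j
      by_cases h : j = k
      · subst h; simp [Function.update_self, hvk]
      · simp [Function.update_of_ne h, hv, Finset.mem_insert, h]
    have step := softmax_step v k (b k - a k) (rr k) (hab k)
    calc ∑ j, |Real.exp (if j ∈ insert k S then b j else a j)
            / (∑ l, Real.exp (if l ∈ insert k S then b l else a l))
            - Real.exp (a j) / (∑ l, Real.exp (a l))|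
        ≤ ∑ j, (|Real.exp (if j ∈ insert k S then b j else a j)
            / (∑ l, Real.exp (if l ∈ insert k S then b l else a l))
            - Real.exp (v j) / (∑ l, Real.exp (v l))|
          + |Real.exp (v j) / (∑ l, Real.exp (v l))
            - Real.exp (a j) / (∑ l, Real.exp (a l))|) := by
          exact Finset.sum_le_sum fun j _ => abs_sub_le _ _ _
      _ = (∑ j, |Real.exp (if j ∈ insert k S then b j else a j)
            / (∑ l, Real.exp (if l ∈ insert k S then b l else a l))
            - Real.exp (v j) / (∑ l, Real.exp (v l))|)
          + ∑ j, |Real.exp (v j) / (∑ l, Real.exp (v l))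
            - Real.exp (a j) / (∑ l, Real.exp (a l))| := Finset.sum_add_distrib
      _ ≤ (Real.exp (rr k) - 1) + ∑ k ∈ S, (Real.exp (rr k) - 1) := by
          refine add_le_add ?_ ih
          have : ∀ j, (if j ∈ insert k S then b j else a j)
              = Function.update v k (v k + (b k - a k)) j := fun j => congrFun hnew j
          simp only [this]
          exact step
      _ = ∑ k' ∈ insert k S, (Real.exp (rr k') - 1) := by rw [Finset.sum_insert hk]



/-- Total-variation bound: the ℓ1 distance between the softmax outputs of two
linear classifiers is bounded by `Σ_j |e^{‖Δ_j‖₁} − 1|` where `Δ = W̃ − W*`,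
for any feature `F` with `‖F‖_∞ ≤ 1`. -/
theorem softmax_tv_bound (C d : ℕ)
    (Wstar Wtil : Matrix (Fin C) (Fin d) ℝ)
    (F : Fin d → ℝ) (hF : ∀ i, |F i| ≤ 1) :
    ∑ j, |Real.exp (Wtil.mulVec F j) / (∑ l, Real.exp (Wtil.mulVec F l))
          - Real.exp (Wstar.mulVec F j) / (∑ l, Real.exp (Wstar.mulVec F l))|
      ≤ ∑ j, |Real.exp (∑ i, |Wtil j i - Wstar j i|) - 1| := by
  classical
  set a : Fin C → ℝ := fun j => Wstar.mulVec F j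
  set b : Fin C → ℝ := fun j => Wtil.mulVec F j
  set rr : Fin C → ℝ := fun j => ∑ i, |Wtil j i - Wstar j i| with hrr
  have hrr0 : ∀ j, 0 ≤ rr j := fun j => Finset.sum_nonneg fun i _ => abs_nonneg _
  have hab : ∀ j, |b j - a j| ≤ rr j := by
    intro j
    have hbj : b j - a j = ∑ i, (Wtil j i - Wstar j i) * F i := by
      simp only [a, b, Matrix.mulVec, dotProduct, ← Finset.sum_sub_distrib]
      exact Finset.sum_congr rfl fun i _ => by ring
    rw [hbj]
    calc |∑ i, (Wtil j i - Wstar j i) * F i| ≤ ∑ i, |(Wtil j i - Wstar j i) * F i| :=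
          Finset.abs_sum_le_sum_abs _ _
      _ ≤ ∑ i, |Wtil j i - Wstar j i| := by
          apply Finset.sum_le_sum
          intro i _
          rw [abs_mul]
          calc |Wtil j i - Wstar j i| * |F i| ≤ |Wtil j i - Wstar j i| * 1 :=
                mul_le_mul_of_nonneg_left (hF i) (abs_nonneg _)
            _ = |Wtil j i - Wstar j i| := mul_one _
  have h := softmax_tv_aux a b rr hab Finset.univ
  simp only [Finset.mem_univ, if_true] at h
  calc ∑ j, |Real.exp (b j) / (∑ l, Real.exp (b l)) - Real.exp (a j) / (∑ l, Real.exp (a l))|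
      ≤ ∑ j, (Real.exp (rr j) - 1) := h
    _ = ∑ j, |Real.exp (rr j) - 1| := by
        refine Finset.sum_congr rfl fun j _ => ?_
        rw [abs_of_nonneg (by linarith [Real.one_le_exp (hrr0 j)])]
end

section
/- Let x_1, …, x_N ∈ ℝ be N distinct real numbers with labels π(1), …, π(N) ∈ {1,…,C} (C = N, π a bijection). Then there exist w ∈ ℝ^C and b ∈ ℝ^C such that for every i, the vector o^{(i)} = w·x_i + b ∈ ℝ^C attains its strict maximum at coordinate π(i). In other words, a rank-1 linear classifier with bias on a 1-dimensional feature can achieve 100% classification accuracy on any N distinct scalar features with arbitrary distinct labels. -/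
/-! Take as line `π(i)` the tangent to the parabola `t ↦ t ^ 2 / 2` at `x_i`, i.e. slope `x_i` and
intercept `-x_i ^ 2 / 2`. By strict convexity every other tangent lies strictly below the parabola
at `x_i`, where the tangent at `x_i` touches it. -/

section TangentLines

variable {K : Type*} [Field K] [LinearOrder K] [IsStrictOrderedRing K]

theorem tangent_lt_of_ne {a t : K} (h : a ≠ t) :
    a * t + -a ^ 2 / 2 < t * t + -t ^ 2 / 2 := by
  have hsq : 0 < (a - t) ^ 2 := pow_two_pos_of_ne_zero (sub_ne_zero.mpr h)
  calc a * t + -a ^ 2 / 2 = t * t + -t ^ 2 / 2 - (a - t) ^ 2 / 2 := by ring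
    _ < t * t + -t ^ 2 / 2 := by linarith

theorem tangent_lines_strictMax {ι : Type*} {c : ι → K} (hc : Function.Injective c) {j k : ι}
    (hjk : j ≠ k) : c j * c k + -c j ^ 2 / 2 < c k * c k + -c k ^ 2 / 2 :=
  tangent_lt_of_ne (hc.ne hjk)

end TangentLines

/-- A rank-1 linear classifier with bias on a 1-dimensional feature achieves
100% accuracy on any `N` distinct scalar features with arbitrary (bijective)
labels: there exist `w, b` such that `w_j x_i + b_j` attains its strict maximum
at coordinate `π(i)` for every sample `i`. -/
theorem rank_one_with_bias_separates (N : ℕ) (x : Fin N → ℝ)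
    (hx : Function.Injective x) (π : Fin N → Fin N)
    (hπ : Function.Bijective π) :
    ∃ w b : Fin N → ℝ, ∀ i : Fin N, ∀ j : Fin N, j ≠ π i →
      w j * x i + b j < w (π i) * x i + b (π i) := by
  let e := Equiv.ofBijective π hπ
  have hslope : Function.Injective (x ∘ e.symm) := hx.comp e.symm.injective
  refine ⟨x ∘ e.symm, fun j => -(x (e.symm j)) ^ 2 / 2, fun i j hj => ?_⟩
  have hxi : x (e.symm (π i)) = x i := congrArg x (e.symm_apply_apply i)
  simpa only [Function.comp_apply, hxi] using tangent_lines_strictMax hslope hj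
end

section
/- Let n_1 ≥ n_2 ≥ ⋯ ≥ n_H ≥ 1. Among all permutations π of (n_1, …, n_H), the quantity D(π) = Π_{h=2}^{H} (Π_{k=h}^{H} n_{π(k)}) / n_{π(h−1)} is minimized when the sequence is arranged in descending order n_{π(1)} ≥ n_{π(2)} ≥ ⋯ ≥ n_{π(H)}. -/
open Finset

private lemma fin_sub_add (m : ℕ) (h : Fin (m+1)) (hh : h ≠ 0) : (h - 1) + 1 = h := by
  have h1 := Fin.coe_sub_one h
  rw [if_neg hh] at h1
  have h2 := Fin.val_add_one (h - 1)
  apply Fin.ext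
  rw [h2, if_neg]
  · have := h.isLt; have : h.val ≠ 0 := fun e => hh (Fin.ext e); omega
  · intro e
    have := congrArg Fin.val e
    rw [h1, Fin.val_last] at this
    have := h.isLt; have hne : h.val ≠ 0 := fun e => hh (Fin.ext e)
    omega

private lemma fin_add_sub (m : ℕ) (j : Fin (m+1)) (hj : (j:ℕ) ≠ m) : (j + 1) - 1 = j := by
  have hlast : j ≠ Fin.last m := fun e => hj (by simp [e])
  have h2 := Fin.val_add_one j
  rw [if_neg hlast] at h2
  have hne : j + 1 ≠ 0 := by
    intro e; have := congrArg Fin.val e; rw [h2] at this; simp at this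
  have h1 := Fin.coe_sub_one (j + 1)
  rw [if_neg hne] at h1
  apply Fin.ext; rw [h1, h2]; omega

private lemma fin_add_ne_zero (m : ℕ) (j : Fin (m+1)) (hj : (j:ℕ) ≠ m) : j + 1 ≠ 0 := by
  have hlast : j ≠ Fin.last m := fun e => hj (by simp [e])
  have h2 := Fin.val_add_one j
  rw [if_neg hlast] at h2
  intro e; have := congrArg Fin.val e; rw [h2] at this; simp at this

private lemma fin_sub_ne_last (m : ℕ) (h : Fin (m+1)) (hh : h ≠ 0) :
    ((h - 1 : Fin (m+1)) : ℕ) ≠ m := by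
  have h1 := Fin.coe_sub_one h
  rw [if_neg hh] at h1
  have := h.isLt; have hne : h.val ≠ 0 := fun e => hh (Fin.ext e)
  omega

/-- The double sum over `h ≠ 0`, `k ≥ h` collapses to weights `k`. -/
private lemma double_sum (m : ℕ) (f : Fin (m+1) → ℝ) :
    ∑ h ∈ univ.filter (fun h : Fin (m+1) => h ≠ 0),
      ∑ k ∈ univ.filter (fun k : Fin (m+1) => h ≤ k), f k
    = ∑ k : Fin (m+1), ((k : ℕ) : ℝ) * f k := by
  calc ∑ h ∈ univ.filter (fun h : Fin (m+1) => h ≠ 0),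
          ∑ k ∈ univ.filter (fun k : Fin (m+1) => h ≤ k), f k
      = ∑ h : Fin (m+1), ∑ k : Fin (m+1),
          if h ≠ 0 ∧ h ≤ k then f k else 0 := by
        rw [Finset.sum_filter]
        refine Finset.sum_congr rfl fun h _ => ?_
        rw [Finset.sum_filter]
        split
        · refine Finset.sum_congr rfl fun k _ => by simp_all
        · simp_all
    _ = ∑ k : Fin (m+1), ∑ h : Fin (m+1),
          if h ≠ 0 ∧ h ≤ k then f k else 0 := Finset.sum_comm
    _ = ∑ k : Fin (m+1), ((k : ℕ) : ℝ) * f k := by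
        refine Finset.sum_congr rfl fun k _ => ?_
        rw [← Finset.sum_filter]
        rw [Finset.sum_const]
        have : univ.filter (fun h : Fin (m+1) => h ≠ 0 ∧ h ≤ k) = Finset.Ioc 0 k := by
          ext h; simp [Finset.mem_Ioc, Fin.pos_iff_ne_zero]
        rw [this, Fin.card_Ioc]
        simp [nsmul_eq_mul]

/-- The sum over `h ≠ 0` of `g (h-1)` is the sum over `j` with `j ≠ last`. -/
private lemma shift_sum (m : ℕ) (g : Fin (m+1) → ℝ) :
    ∑ h ∈ univ.filter (fun h : Fin (m+1) => h ≠ 0), g (h - 1)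
    = ∑ j ∈ univ.filter (fun j : Fin (m+1) => (j : ℕ) ≠ m), g j := by
  refine Finset.sum_bij' (fun h _ => h - 1) (fun j _ => j + 1) ?_ ?_ ?_ ?_ ?_
  · intro h ha
    simp only [mem_filter, mem_univ, true_and] at ha ⊢
    exact fin_sub_ne_last m h ha
  · intro j hj
    simp only [mem_filter, mem_univ, true_and] at hj ⊢
    exact fin_add_ne_zero m j hj
  · intro h ha
    simp only [mem_filter, mem_univ, true_and] at ha
    exact fin_sub_add m h ha
  · intro j hj
    simp only [mem_filter, mem_univ, true_and] at hj
    exact fin_add_sub m j hj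
  · intro h _; rfl



open Finset in
/-- Among all arrangements of head lengths `n_1 ≥ ⋯ ≥ n_H ≥ 1`, the confusion
degree `D(π) = Π_{h≥2} (Π_{k≥h} n_{π(k)}) / n_{π(h−1)}` is minimized by the
descending arrangement (the identity, since `n` is antitone). -/
theorem confusion_degree_min_descending (H : ℕ) [NeZero H]
    (n : Fin H → ℝ) (h1 : ∀ h, 1 ≤ n h) (hdesc : Antitone n) :
    ∀ σ : Equiv.Perm (Fin H),
      (∏ h ∈ univ.filter (fun h : Fin H => h ≠ 0),
          (∏ k ∈ univ.filter (fun k : Fin H => h ≤ k), n k) / n (h - 1))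
        ≤ ∏ h ∈ univ.filter (fun h : Fin H => h ≠ 0),
            (∏ k ∈ univ.filter (fun k : Fin H => h ≤ k), n (σ k)) / n (σ (h - 1)) := by
  intro σ
  obtain ⟨m, rfl⟩ : ∃ m, H = m + 1 :=
    ⟨H - 1, (Nat.succ_pred_eq_of_pos (Nat.pos_of_ne_zero (NeZero.ne H))).symm⟩
  have hn0 : ∀ k, 0 < n k := fun k => lt_of_lt_of_le one_pos (h1 k)
  set b : Fin (m+1) → ℝ := fun k => Real.log (n k) with hb
  have hb0 : ∀ k, 0 ≤ b k := fun k => Real.log_nonneg (h1 k)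
  have hbanti : Antitone b := fun i j hij =>
    Real.log_le_log (hn0 j) (hdesc hij)
  set w : Fin (m+1) → ℝ := fun k => ((k : ℕ) : ℝ) - (if (k : ℕ) ≠ m then 1 else 0) with hw
  -- positivity of each side
  have hpos : ∀ τ : Fin (m+1) → Fin (m+1),
      0 < ∏ h ∈ univ.filter (fun h : Fin (m+1) => h ≠ 0),
          (∏ k ∈ univ.filter (fun k : Fin (m+1) => h ≤ k), n (τ k)) / n (τ (h - 1)) := by
    intro τ
    refine Finset.prod_pos fun h _ => div_pos (Finset.prod_pos fun k _ => hn0 _) (hn0 _)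
  -- log of the product for any arrangement τ
  have key : ∀ τ : Fin (m+1) → Fin (m+1),
      Real.log (∏ h ∈ univ.filter (fun h : Fin (m+1) => h ≠ 0),
          (∏ k ∈ univ.filter (fun k : Fin (m+1) => h ≤ k), n (τ k)) / n (τ (h - 1)))
      = ∑ k : Fin (m+1), w k * b (τ k) := by
    intro τ
    rw [Real.log_prod (fun h _ =>
      (div_pos (Finset.prod_pos fun k _ => hn0 _) (hn0 _)).ne')]
    have : ∀ h ∈ univ.filter (fun h : Fin (m+1) => h ≠ 0),
        Real.log ((∏ k ∈ univ.filter (fun k : Fin (m+1) => h ≤ k), n (τ k)) / n (τ (h - 1)))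
        = (∑ k ∈ univ.filter (fun k : Fin (m+1) => h ≤ k), b (τ k)) - b (τ (h - 1)) := by
      intro h _
      rw [Real.log_div (Finset.prod_pos fun k _ => hn0 _).ne' (hn0 _).ne',
        Real.log_prod (fun k _ => (hn0 _).ne')]
    rw [Finset.sum_congr rfl this, Finset.sum_sub_distrib, double_sum,
      shift_sum m (fun j => b (τ j))]
    rw [Finset.sum_filter]
    rw [← Finset.sum_sub_distrib]
    refine Finset.sum_congr rfl fun k _ => ?_
    by_cases hk : (k : ℕ) = m <;> simp [hw, hk] <;> ring_nf
  -- antivariance of w and b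
  have hwmono : Monotone w := by
    intro i j hij
    have hvv : (i : ℕ) ≤ (j : ℕ) := hij
    have hc : ((i : ℕ) : ℝ) ≤ ((j : ℕ) : ℝ) := Nat.cast_le.mpr hvv
    simp only [hw]
    by_cases hjm : (j : ℕ) = m
    · by_cases him : (i : ℕ) = m
      · simp [him, hjm]
      · rw [if_neg (not_not_intro hjm), if_pos him]
        linarith
    · have him : (i : ℕ) ≠ m := by omega
      rw [if_pos him, if_pos hjm]
      linarith
  have hanti : Antivary w b := by
    intro i j hbij
    rcases le_or_gt i j with h | h
    · exact absurd (hbanti h) (not_le.mpr hbij)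
    · exact hwmono h.le
  have rearr : ∑ k : Fin (m+1), w k * b k ≤ ∑ k : Fin (m+1), w k * b (σ k) := by
    simpa only [smul_eq_mul] using hanti.sum_smul_le_sum_smul_comp_perm (σ := σ)
  have hkey_id := key id
  have hkey_s := key σ
  simp only [id] at hkey_id
  refine (Real.log_le_log_iff ?_ ?_).mp ?_
  · exact Finset.prod_pos fun h _ => div_pos (Finset.prod_pos fun k _ => hn0 _) (hn0 _)
  · exact Finset.prod_pos fun h _ => div_pos (Finset.prod_pos fun k _ => hn0 _) (hn0 _)
  · rw [hkey_id, hkey_s]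
    exact rearr
end
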